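/- Let p be the softmax distribution at temperature λ > 0 of scores s ∈ ℝⁿ, and let M = maxᵢ sᵢ and m = minᵢ sᵢ. Then the Shannon entropy satisfies H(p) ≥ log n − (M − m)/λ. -/
import Mathlib


open Real

/-- Entropy of the softmax is at least `log n - (M - m)/λ` where `M` and `m` are the
largest and smallest scores. -/
theorem softmax_entropy_lower_bound
    (n : ℕ) (hn : 0 < n) (s : Fin n → ℝ) (lam : ℝ) (hlam : 0 < lam)
    (hne : (Finset.univ : Finset (Fin n)).Nonempty) :
    Real.log n -
        (Finset.univ.sup' hne s - Finset.univ.inf' hne s) / lam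
      ≤ -∑ i, (Real.exp (s i / lam) / ∑ j, Real.exp (s j / lam)) *
          Real.log (Real.exp (s i / lam) / ∑ j, Real.exp (s j / lam)) := by
  set M := Finset.univ.sup' hne s with hMdef
  set m := Finset.univ.inf' hne s with hmdef
  set Z := ∑ j, Real.exp (s j / lam) with hZdef
  have hZ : 0 < Z := Finset.sum_pos (fun _ _ => Real.exp_pos _) hne
  have hsum1 : ∑ i, Real.exp (s i / lam) / Z = 1 := by
    rw [← Finset.sum_div, div_self (ne_of_gt hZ)]
  have hlog : ∀ i : Fin n, Real.log (Real.exp (s i / lam) / Z)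
      = s i / lam - Real.log Z := fun i => by
    rw [Real.log_div (Real.exp_ne_zero _) (ne_of_gt hZ), Real.log_exp]
  have key : -∑ i, (Real.exp (s i / lam) / Z) * Real.log (Real.exp (s i / lam) / Z)
      = Real.log Z - ∑ i, (Real.exp (s i / lam) / Z) * (s i / lam) := by
    have h1 : ∀ i : Fin n, (Real.exp (s i / lam) / Z) * Real.log (Real.exp (s i / lam) / Z)
        = (Real.exp (s i / lam) / Z) * (s i / lam)
          - (Real.exp (s i / lam) / Z) * Real.log Z := fun i => by
      rw [hlog i]; ring
    rw [Finset.sum_congr rfl fun i _ => h1 i, Finset.sum_sub_distrib,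
      ← Finset.sum_mul, hsum1]
    ring
  rw [key]
  have hMb : ∑ i, (Real.exp (s i / lam) / Z) * (s i / lam) ≤ M / lam := by
    calc ∑ i, (Real.exp (s i / lam) / Z) * (s i / lam)
        ≤ ∑ i : Fin n, (Real.exp (s i / lam) / Z) * (M / lam) := by
          apply Finset.sum_le_sum
          intro i _
          have hp : 0 ≤ Real.exp (s i / lam) / Z := by positivity
          have hs : s i ≤ M := Finset.le_sup' s (Finset.mem_univ i)
          exact mul_le_mul_of_nonneg_left (by gcongr) hp
      _ = M / lam := by rw [← Finset.sum_mul, hsum1, one_mul]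
  have hZb : Real.log n + m / lam ≤ Real.log Z := by
    have h1 : (n : ℝ) * Real.exp (m / lam) ≤ Z := by
      calc (n : ℝ) * Real.exp (m / lam)
          = ∑ _i : Fin n, Real.exp (m / lam) := by
            rw [Finset.sum_const, Finset.card_univ, Fintype.card_fin, nsmul_eq_mul]
        _ ≤ Z := Finset.sum_le_sum fun i _ => Real.exp_le_exp.2
            (by gcongr; exact Finset.inf'_le s (Finset.mem_univ i))
    have hnpos : (0 : ℝ) < (n : ℝ) * Real.exp (m / lam) := by positivity
    have := Real.log_le_log hnpos h1
    rwa [Real.log_mul (by positivity) (Real.exp_ne_zero _), Real.log_exp] at this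
  have hsub : (M - m) / lam = M / lam - m / lam := sub_div _ _ _
  linarith
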